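/- Fix J > 0 and let H_n = H_n^s + H_n^J. Then ker(H_n) equals the span of the basis states {e_t : t ∈ T_n}, where T_n is the set of strings with all letters nonzero in which no positive letter m is immediately followed by −m; in particular, dim ker(H_n) = |T_n| and the ground space of H_n is spanned by product (basis) states. -/

import Mathlib

open Finset

/-- The alphabet `Σ = {m ∈ ℤ : |m| ≤ s}`. -/
abbrev SpinLetter (s : ℕ) := {m : ℤ // m ∈ Finset.Icc (-(s : ℤ)) (s : ℤ)}

/-- Strings of length `n` over `Σ`. -/
abbrev SpinStr (s n : ℕ) := Fin n → SpinLetter s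

/-- The single-move relation `R`: exchange `0m ↔ m0` for `m ∈ Σ_*`, or
create/annihilate `00 ↔ m(−m)` for `m ∈ {1,…,s}`, at adjacent positions `k, k+1`. -/
def MoveRel (s n : ℕ) (u v : SpinStr s n) : Prop :=
  ∃ k : ℕ, ∃ hk1 : k + 1 < n,
    (∀ i : Fin n, (i : ℕ) ≠ k → (i : ℕ) ≠ k + 1 → u i = v i) ∧
    ((∃ m : ℤ, m ≠ 0 ∧ |m| ≤ (s : ℤ) ∧
        (((u ⟨k, Nat.lt_of_succ_lt hk1⟩ : ℤ) = 0 ∧ (u ⟨k + 1, hk1⟩ : ℤ) = m ∧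
          (v ⟨k, Nat.lt_of_succ_lt hk1⟩ : ℤ) = m ∧ (v ⟨k + 1, hk1⟩ : ℤ) = 0) ∨
         ((u ⟨k, Nat.lt_of_succ_lt hk1⟩ : ℤ) = m ∧ (u ⟨k + 1, hk1⟩ : ℤ) = 0 ∧
          (v ⟨k, Nat.lt_of_succ_lt hk1⟩ : ℤ) = 0 ∧ (v ⟨k + 1, hk1⟩ : ℤ) = m))) ∨
     (∃ m : ℤ, 1 ≤ m ∧ m ≤ (s : ℤ) ∧
        (((u ⟨k, Nat.lt_of_succ_lt hk1⟩ : ℤ) = 0 ∧ (u ⟨k + 1, hk1⟩ : ℤ) = 0 ∧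
          (v ⟨k, Nat.lt_of_succ_lt hk1⟩ : ℤ) = m ∧ (v ⟨k + 1, hk1⟩ : ℤ) = -m) ∨
         ((u ⟨k, Nat.lt_of_succ_lt hk1⟩ : ℤ) = m ∧ (u ⟨k + 1, hk1⟩ : ℤ) = -m ∧
          (v ⟨k, Nat.lt_of_succ_lt hk1⟩ : ℤ) = 0 ∧ (v ⟨k + 1, hk1⟩ : ℤ) = 0))))

/-- `Π_{u,v}`: the orthogonal projection onto the span of `e_u − e_v`,
as a linear operator on the full Hilbert space. -/
noncomputable def projUV (s n : ℕ) (u v : SpinStr s n) :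
    EuclideanSpace ℂ (SpinStr s n) →ₗ[ℂ] EuclideanSpace ℂ (SpinStr s n) :=
  (ℂ ∙ (EuclideanSpace.single u (1 : ℂ) - EuclideanSpace.single v (1 : ℂ))).subtype.comp
    (ℂ ∙ (EuclideanSpace.single u (1 : ℂ) -
      EuclideanSpace.single v (1 : ℂ))).orthogonalProjectionOnto.toLinearMap

/-- The Hamiltonian `H_n^s`: the sum of `Π_{u,v}` over all unordered pairs `{u,v}`
with `u R v` (realized as half the sum over ordered pairs, since `R` is symmetric
and `Π_{u,v} = Π_{v,u}`). -/
noncomputable def Hns (s n : ℕ) :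
    EuclideanSpace ℂ (SpinStr s n) →ₗ[ℂ] EuclideanSpace ℂ (SpinStr s n) :=
  letI := Classical.decPred (fun p : SpinStr s n × SpinStr s n => MoveRel s n p.1 p.2)
  (2⁻¹ : ℂ) •
    ∑ p ∈ Finset.univ.filter (fun p : SpinStr s n × SpinStr s n => MoveRel s n p.1 p.2),
      projUV s n p.1 p.2

/-- The diagonal operator `H_n^J`, acting by `H_n^J e_t = J·|{k : t_k = 0}|·e_t`. -/
noncomputable def HJop (s n : ℕ) (J : ℝ) :
    EuclideanSpace ℂ (SpinStr s n) →ₗ[ℂ] EuclideanSpace ℂ (SpinStr s n) where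
  toFun ψ := WithLp.toLp 2 fun t =>
    ((J * ((Finset.univ.filter (fun k : Fin n => (t k : ℤ) = 0)).card : ℝ) : ℝ) : ℂ) * ψ t
  map_add' ψ φ := by ext t; simp [mul_add]
  map_smul' a ψ := by ext t; simp; ring

/-- `T_n`: strings with all letters nonzero in which no positive letter `m` is
immediately followed by `−m`. -/
noncomputable def TnStr (s n : ℕ) : Finset (SpinStr s n) :=
  letI := Classical.decPred
    (fun t : SpinStr s n => (∀ i, (t i : ℤ) ≠ 0) ∧
      ∀ (i : Fin n) (h : (i : ℕ) + 1 < n),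
        ¬(0 < (t i : ℤ) ∧ (t ⟨(i : ℕ) + 1, h⟩ : ℤ) = -(t i : ℤ)))
  Finset.univ.filter
    (fun t : SpinStr s n => (∀ i, (t i : ℤ) ≠ 0) ∧
      ∀ (i : Fin n) (h : (i : ℕ) + 1 < n),
        ¬(0 < (t i : ℤ) ∧ (t ⟨(i : ℕ) + 1, h⟩ : ℤ) = -(t i : ℤ)))

/-! Both terms of the Hamiltonian are positive semidefinite, so the kernel of the sum is the
intersection of the kernels. The kernel of `Π_{u,v}` is `{ψ | ψ u = ψ v}`, and since `J > 0` the
kernel of `H_n^J` consists of the vectors vanishing on strings with a letter `0`. A string outside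
`T_n` either has a letter `0` or contains a factor `m(−m)`, which a move connects to `00`; hence a
kernel vector is supported on `T_n`. Conversely a string of `T_n` is the endpoint of no move, since
every move involves a `0` or a factor `m(−m)`, so its basis vector lies in both kernels. -/

open scoped InnerProductSpace ComplexOrder

namespace LinearMap.IsPositive

variable {𝕜 E : Type*} [RCLike 𝕜] [NormedAddCommGroup E] [InnerProductSpace 𝕜 E]

theorem apply_eq_zero_of_re_inner_self_eq_zero {T : E →ₗ[𝕜] E} (hT : T.IsPositive) {x : E}
    (hx : RCLike.re ⟪T x, x⟫_𝕜 = 0) : T x = 0 := by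
  -- evaluate the form at `x - t • T x`; for small `t > 0` this forces `‖T x‖ = 0`
  have key (t : ℝ) : 2 * t * ‖T x‖ ^ 2 ≤ t ^ 2 * RCLike.re ⟪T (T x), T x⟫_𝕜 := by
    have h := hT.re_inner_nonneg_left (x - (t : 𝕜) • T x)
    have hsym : ⟪T (T x), x⟫_𝕜 = ⟪T x, T x⟫_𝕜 := hT.isSymmetric _ _
    simp only [map_sub, map_smul, inner_sub_left, inner_sub_right, inner_smul_left,
      inner_smul_right, hsym, RCLike.conj_ofReal, hx, inner_self_eq_norm_sq_to_K] at h
    simp only [RCLike.re_ofReal_mul, map_sub, ← RCLike.ofReal_pow, RCLike.ofReal_re] at h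
    linarith
  set c := ‖T x‖ ^ 2
  set b := RCLike.re ⟪T (T x), T x⟫_𝕜
  have hb : 0 ≤ b := hT.re_inner_nonneg_left _
  have hc : c = 0 := by
    have := key (c / (b + 1))
    field_simp at this
    nlinarith [sq_nonneg c]
  simpa [c] using hc

theorem ker_add {A B : E →ₗ[𝕜] E} (hA : A.IsPositive) (hB : B.IsPositive) :
    ker (A + B) = ker A ⊓ ker B := by
  refine le_antisymm (fun x hx => ?_) (fun x ⟨hAx, hBx⟩ => by simp_all)
  have hsum : RCLike.re ⟪A x, x⟫_𝕜 + RCLike.re ⟪B x, x⟫_𝕜 = 0 := by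
    rw [← map_add, ← inner_add_left, ← add_apply, mem_ker.mp hx, inner_zero_left, map_zero]
  have hA0 := hA.re_inner_nonneg_left x
  have hB0 := hB.re_inner_nonneg_left x
  exact ⟨hA.apply_eq_zero_of_re_inner_self_eq_zero (by linarith),
    hB.apply_eq_zero_of_re_inner_self_eq_zero (by linarith)⟩

theorem ker_sum {ι : Type*} {T : ι → E →ₗ[𝕜] E} (s : Finset ι)
    (hT : ∀ i ∈ s, (T i).IsPositive) : ker (∑ i ∈ s, T i) = ⨅ i ∈ s, ker (T i) := by
  classical
  induction s using Finset.induction_on with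
  | empty => simp
  | insert a s ha ih =>
    have hs : ∀ i ∈ s, (T i).IsPositive := fun i hi => hT i (Finset.mem_insert_of_mem hi)
    rw [Finset.sum_insert ha, ker_add (hT a (Finset.mem_insert_self a s)) (isPositive_sum s hs),
      ih hs, Finset.iInf_insert]

end LinearMap.IsPositive

namespace EuclideanSpace

variable {𝕜 ι : Type*} [RCLike 𝕜] [Fintype ι] [DecidableEq ι]

theorem setOf_single_eq_image (S : Finset ι) :
    {φ : EuclideanSpace 𝕜 ι | ∃ i ∈ S, φ = single i 1} = basisFun ι 𝕜 '' S := by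
  ext φ
  simp [basisFun_apply, eq_comm]

theorem mem_span_single_of_forall_notMem {S : Finset ι} {ψ : EuclideanSpace 𝕜 ι}
    (h : ∀ i ∉ S, ψ i = 0) : ψ ∈ Submodule.span 𝕜 {φ | ∃ i ∈ S, φ = single i 1} := by
  rw [setOf_single_eq_image, ← OrthonormalBasis.coe_toBasis, Module.Basis.mem_span_image]
  intro i hi
  by_contra hiS
  exact (Finsupp.mem_support_iff.mp hi) (h i hiS)

theorem finrank_span_single (S : Finset ι) :
    Module.finrank 𝕜 (Submodule.span 𝕜 {φ : EuclideanSpace 𝕜 ι | ∃ i ∈ S, φ = single i 1}) =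
      S.card := by
  rw [setOf_single_eq_image, Set.image_eq_range, finrank_span_eq_card]
  · simp
  · exact (basisFun ι 𝕜).toBasis.linearIndependent.comp _ Subtype.val_injective

end EuclideanSpace

section Hamiltonian

variable {s n : ℕ}

theorem projUV_eq_starProjection (u v : SpinStr s n) :
    projUV s n u v =
      ((ℂ ∙ (EuclideanSpace.single u (1 : ℂ) - EuclideanSpace.single v 1)).starProjection :
        EuclideanSpace ℂ (SpinStr s n) →ₗ[ℂ] EuclideanSpace ℂ (SpinStr s n)) :=
  rfl

theorem isPositive_projUV (u v : SpinStr s n) : (projUV s n u v).IsPositive := by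
  rw [projUV_eq_starProjection]
  exact (Submodule.isSymmetricProjection_starProjection _).isPositive

theorem projUV_apply_eq_zero_iff {u v : SpinStr s n} {ψ : EuclideanSpace ℂ (SpinStr s n)} :
    projUV s n u v ψ = 0 ↔ ψ u = ψ v := by
  rw [projUV_eq_starProjection, ContinuousLinearMap.coe_coe,
    Submodule.starProjection_apply_eq_zero_iff, Submodule.mem_orthogonal_singleton_iff_inner_right,
    inner_sub_left, EuclideanSpace.inner_single_left, EuclideanSpace.inner_single_left, sub_eq_zero]
  simp

theorem isPositive_Hns : (Hns s n).IsPositive := by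
  unfold Hns
  refine LinearMap.IsPositive.smul_of_nonneg ?_ (by positivity)
  exact LinearMap.isPositive_sum (T := fun p : SpinStr s n × SpinStr s n => projUV s n p.1 p.2) _
    fun p _ => isPositive_projUV p.1 p.2

theorem mem_ker_Hns_iff {ψ : EuclideanSpace ℂ (SpinStr s n)} :
    ψ ∈ LinearMap.ker (Hns s n) ↔ ∀ u v, MoveRel s n u v → ψ u = ψ v := by
  unfold Hns
  rw [LinearMap.ker_smul _ _ (by norm_num),
    LinearMap.IsPositive.ker_sum (T := fun p : SpinStr s n × SpinStr s n => projUV s n p.1 p.2) _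
      fun p _ => isPositive_projUV p.1 p.2]
  simp [Submodule.mem_iInf, projUV_apply_eq_zero_iff]

theorem HJop_eq_toEuclideanLin (J : ℝ) :
    HJop s n J = Matrix.toEuclideanLin (Matrix.diagonal fun t : SpinStr s n =>
      ((J * (Finset.univ.filter (fun k : Fin n => (t k : ℤ) = 0)).card : ℝ) : ℂ)) := by
  ext ψ t
  simp [HJop, Matrix.toLpLin_apply, Matrix.mulVec_diagonal]

theorem isPositive_HJop {J : ℝ} (hJ : 0 ≤ J) : (HJop s n J).IsPositive := by
  rw [HJop_eq_toEuclideanLin, Matrix.isPositive_toEuclideanLin_iff, Matrix.posSemidef_diagonal_iff]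
  intro t
  exact_mod_cast mul_nonneg hJ (Nat.cast_nonneg _)

theorem mem_ker_HJop_iff {J : ℝ} (hJ : J ≠ 0) {ψ : EuclideanSpace ℂ (SpinStr s n)} :
    ψ ∈ LinearMap.ker (HJop s n J) ↔ ∀ t : SpinStr s n, (∃ k, (t k : ℤ) = 0) → ψ t = 0 := by
  rw [LinearMap.mem_ker, ← (WithLp.ofLp_injective 2).eq_iff]
  simp [funext_iff, HJop, hJ, Finset.filter_eq_empty_iff, or_iff_not_imp_left]

theorem mem_ker_Hns_add_HJop_iff {J : ℝ} (hJ : 0 < J) {ψ : EuclideanSpace ℂ (SpinStr s n)} :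
    ψ ∈ LinearMap.ker (Hns s n + HJop s n J) ↔
      (∀ u v, MoveRel s n u v → ψ u = ψ v) ∧
        ∀ t : SpinStr s n, (∃ k, (t k : ℤ) = 0) → ψ t = 0 := by
  rw [LinearMap.IsPositive.ker_add isPositive_Hns (isPositive_HJop hJ.le), Submodule.mem_inf,
    mem_ker_Hns_iff, mem_ker_HJop_iff hJ.ne']

end Hamiltonian

section Strings

variable {s n : ℕ}

theorem MoveRel.symm {u v : SpinStr s n} (h : MoveRel s n u v) : MoveRel s n v u := by
  obtain ⟨k, hk, hout, h⟩ := h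
  refine ⟨k, hk, fun i h1 h2 => (hout i h1 h2).symm, ?_⟩
  rcases h with ⟨m, hm, hms, h⟩ | ⟨m, hm, hms, h⟩
  · exact Or.inl ⟨m, hm, hms, by tauto⟩
  · exact Or.inr ⟨m, hm, hms, by tauto⟩

theorem mem_TnStr {t : SpinStr s n} :
    t ∈ TnStr s n ↔ (∀ i, (t i : ℤ) ≠ 0) ∧
      ∀ (i : Fin n) (h : (i : ℕ) + 1 < n),
        ¬(0 < (t i : ℤ) ∧ (t ⟨(i : ℕ) + 1, h⟩ : ℤ) = -(t i : ℤ)) := by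
  simp [TnStr]

theorem not_moveRel_of_mem_TnStr {t v : SpinStr s n} (ht : t ∈ TnStr s n) :
    ¬MoveRel s n t v := by
  obtain ⟨hnz, hpair⟩ := mem_TnStr.mp ht
  rintro ⟨k, hk, -, ⟨m, -, -, ⟨h0, -⟩ | ⟨-, h1, -⟩⟩ | ⟨m, hm, -, ⟨h0, -⟩ | ⟨h0, h1, -⟩⟩⟩
  · exact hnz _ h0
  · exact hnz _ h1
  · exact hnz _ h0
  · exact hpair ⟨k, by omega⟩ hk ⟨by omega, by rw [h1, h0]⟩

theorem exists_moveRel_of_notMem_TnStr {t : SpinStr s n} (ht : t ∉ TnStr s n) :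
    (∃ k, (t k : ℤ) = 0) ∨ ∃ u : SpinStr s n, (∃ k, (u k : ℤ) = 0) ∧ MoveRel s n u t := by
  by_cases hzero : ∃ k, (t k : ℤ) = 0
  · exact Or.inl hzero
  have hpair := not_and.mp (mem_TnStr.not.mp ht) fun k hk => hzero ⟨k, hk⟩
  push Not at hpair
  obtain ⟨j, hj, hpos, hneg⟩ := hpair
  let u : SpinStr s n := fun i =>
    if (i : ℕ) = j ∨ (i : ℕ) = j + 1 then ⟨0, by simp⟩ else t i
  refine Or.inr ⟨u, ⟨j, by simp [u]⟩, j, hj, fun i h1 h2 => by simp [u, h1, h2],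
    Or.inr ⟨t j, hpos, (Finset.mem_Icc.mp (t j).2).2, Or.inl ⟨by simp [u], by simp [u], rfl, hneg⟩⟩⟩

end Strings

theorem single_mem_ker_of_mem_TnStr {s n : ℕ} {J : ℝ} (hJ : 0 < J) {t : SpinStr s n}
    (ht : t ∈ TnStr s n) :
    EuclideanSpace.single t (1 : ℂ) ∈ LinearMap.ker (Hns s n + HJop s n J) := by
  refine (mem_ker_Hns_add_HJop_iff hJ).mpr ⟨fun u v huv => ?_, fun u ⟨k, hk⟩ => ?_⟩
  · have hu : u ≠ t := fun h => not_moveRel_of_mem_TnStr ht (h ▸ huv)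
    have hv : v ≠ t := fun h => not_moveRel_of_mem_TnStr ht (h ▸ huv.symm)
    simp [hu, hv]
  · have hu : u ≠ t := fun h => (mem_TnStr.mp ht).1 k (h ▸ hk)
    simp [hu]

theorem stmt_15_general (s n : ℕ) (J : ℝ) (hJ : 0 < J) :
    LinearMap.ker (Hns s n + HJop s n J)
      = Submodule.span ℂ {φ : EuclideanSpace ℂ (SpinStr s n) |
          ∃ t ∈ TnStr s n, φ = EuclideanSpace.single t (1 : ℂ)} ∧
    Module.finrank ℂ (LinearMap.ker (Hns s n + HJop s n J)) = (TnStr s n).card := by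
  have hspan : LinearMap.ker (Hns s n + HJop s n J)
      = Submodule.span ℂ {φ : EuclideanSpace ℂ (SpinStr s n) |
          ∃ t ∈ TnStr s n, φ = EuclideanSpace.single t (1 : ℂ)} := by
    refine le_antisymm (fun ψ hψ => ?_) (Submodule.span_le.mpr ?_)
    · obtain ⟨hmove, hvac⟩ := (mem_ker_Hns_add_HJop_iff hJ).mp hψ
      refine EuclideanSpace.mem_span_single_of_forall_notMem fun t ht => ?_
      rcases exists_moveRel_of_notMem_TnStr ht with hzero | ⟨u, hu, hut⟩
      · exact hvac t hzero
      · rw [← hmove u t hut, hvac u hu]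
    · rintro _ ⟨t, ht, rfl⟩
      exact single_mem_ker_of_mem_TnStr hJ ht
  exact ⟨hspan, hspan ▸ EuclideanSpace.finrank_span_single _⟩

theorem stmt_15 (s n : ℕ) (hs : 1 ≤ s) (hn : 1 ≤ n) (J : ℝ) (hJ : 0 < J) :
    LinearMap.ker (Hns s n + HJop s n J)
      = Submodule.span ℂ {φ : EuclideanSpace ℂ (SpinStr s n) |
          ∃ t ∈ TnStr s n, φ = EuclideanSpace.single t (1 : ℂ)} ∧
    Module.finrank ℂ (LinearMap.ker (Hns s n + HJop s n J)) = (TnStr s n).card :=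
  stmt_15_general s n J hJ
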